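/- arXiv:2604.17035 — 7 statements merged into one kernel-verified Lean document; each statement's English description precedes it below -/
import Mathlib

section
/- Let f : ℝ → ℝ be nonnegative and measurable, and suppose β ↦ f(β) exp(-β E') and β ↦ β f(β) exp(-β E') are integrable on [0,∞) for all E' in a neighborhood of E, with ρ(E) > 0. Then the conditional mean of the inverse temperature given energy E equals the fundamental inverse temperature: ∫₀^∞ β · (f(β) exp(-β E)/ρ(E)) dβ = -(d/dE) log ρ(E) = β_F(E). -/
open MeasureTheory Real

/-- The superstatistical ensemble function: the Laplace transform of the
weight function `f` over `[0, ∞)`. -/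
noncomputable def rho (f : ℝ → ℝ) (E : ℝ) : ℝ :=
  ∫ β in Set.Ici (0 : ℝ), f β * Real.exp (-β * E)

/-- The fundamental inverse temperature `β_F(E) = -(d/dE) log ρ(E)`. -/
noncomputable def betaF (f : ℝ → ℝ) (E : ℝ) : ℝ :=
  -deriv (fun E' => Real.log (rho f E')) E

/-!
The Laplace transform `ρ(E) = ∫ f(β) e^{-βE} dβ` over `β ≥ 0` may be differentiated under the
integral sign, giving `ρ'(E) = -∫ β f(β) e^{-βE} dβ`: on `E' > E₀` the derivative of the
integrand is dominated by `|β f(β)| e^{-βE₀}`, integrable for any `E₀ < E` close to `E`.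
Hence `β_F(E) = -ρ'(E)/ρ(E)` is the mean of `β` under `P(β|E) = f(β) e^{-βE}/ρ(E)`.
-/

theorem aestronglyMeasurable_mul_exp_neg_mul {μ : Measure ℝ} {g : ℝ → ℝ} {E : ℝ}
    (hg : AEStronglyMeasurable (fun β => g β * exp (-β * E)) μ) (E' : ℝ) :
    AEStronglyMeasurable (fun β => g β * exp (-β * E')) μ := by
  have : (fun β => g β * exp (-β * E')) =
      fun β => g β * exp (-β * E) * exp (-β * (E' - E)) := by
    ext β; rw [mul_assoc, ← exp_add]; ring_nf
  rw [this]
  exact hg.mul (by fun_prop : Continuous _).aestronglyMeasurable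

theorem hasDerivAt_integral_mul_exp_neg_mul {μ : Measure ℝ} {f : ℝ → ℝ} {E₀ E : ℝ}
    (hμ : ∀ᵐ β ∂μ, 0 ≤ β) (hE₀ : E₀ < E)
    (hf : Integrable (fun β => f β * exp (-β * E)) μ)
    (hf₁ : Integrable (fun β => β * f β * exp (-β * E₀)) μ) :
    HasDerivAt (fun E' => ∫ β, f β * exp (-β * E') ∂μ)
      (-∫ β, β * f β * exp (-β * E) ∂μ) E := by
  have key := hasDerivAt_integral_of_dominated_loc_of_deriv_le (μ := μ)
    (F := fun E' β => f β * exp (-β * E')) (F' := fun E' β => -(β * f β * exp (-β * E')))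
    (bound := fun β => ‖β * f β‖ * exp (-β * E₀)) (Ioi_mem_nhds hE₀)
    (.of_forall (aestronglyMeasurable_mul_exp_neg_mul hf.aestronglyMeasurable)) hf
    (aestronglyMeasurable_mul_exp_neg_mul hf₁.aestronglyMeasurable E).neg ?_ ?_ ?_
  · simpa only [integral_neg] using key.2
  · filter_upwards [hμ] with β hβ E' (hE' : E₀ < E')
    rw [norm_neg, norm_mul _ (exp _), norm_of_nonneg (exp_pos _).le]
    exact mul_le_mul_of_nonneg_left (exp_le_exp.2 (by nlinarith)) (norm_nonneg _)
  · simpa only [norm_mul, Real.norm_eq_abs, abs_exp] using hf₁.norm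
  · filter_upwards with β E' _
    exact (((hasDerivAt_id' E').const_mul (-β)).exp.const_mul (f β)).congr_deriv (by ring)

theorem conditional_mean_beta_eq_betaF_general
    (f : ℝ → ℝ) (E : ℝ)
    (hint : ∃ U ∈ nhds E, ∀ E' ∈ U, ∀ k ≤ 1,
      IntegrableOn (fun β => β ^ k * f β * Real.exp (-β * E')) (Set.Ici (0 : ℝ)))
    (hpos : 0 < rho f E) :
    ∫ β in Set.Ici (0 : ℝ), β * (f β * Real.exp (-β * E) / rho f E) = betaF f E := by
  obtain ⟨U, hU, hI⟩ := hint
  obtain ⟨E₀, hE₀E, hE₀U⟩ := Filter.Eventually.exists_lt hU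
  have hρ : HasDerivAt (rho f) (-∫ β in Set.Ici 0, β * f β * exp (-β * E)) E :=
    hasDerivAt_integral_mul_exp_neg_mul (ae_restrict_mem measurableSet_Ici) hE₀E
      (by simpa using (hI E (mem_of_mem_nhds hU) 0 zero_le_one).integrable)
      (by simpa using (hI E₀ hE₀U 1 le_rfl).integrable)
  rw [betaF, (hρ.log hpos.ne').deriv, neg_div, neg_neg, ← integral_div]
  simp only [mul_div_assoc, mul_assoc]

/-- The conditional mean of the inverse temperature given the energy `E`
equals the fundamental inverse temperature `β_F(E) = -(d/dE) log ρ(E)`. -/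
theorem conditional_mean_beta_eq_betaF
    (f : ℝ → ℝ) (hf_meas : Measurable f) (hf_nonneg : ∀ β, 0 ≤ f β) (E : ℝ)
    (hint : ∃ U ∈ nhds E, ∀ E' ∈ U, ∀ k ≤ 1,
      IntegrableOn (fun β => β ^ k * f β * Real.exp (-β * E')) (Set.Ici (0 : ℝ)))
    (hpos : 0 < rho f E) :
    ∫ β in Set.Ici (0 : ℝ), β * (f β * Real.exp (-β * E) / rho f E) = betaF f E :=
  conditional_mean_beta_eq_betaF_general f E hint hpos
end

section
/- Let f : ℝ → ℝ be nonnegative and measurable, and suppose β ↦ β^k f(β) exp(-β E') is integrable on [0,∞) for k = 0, 1, 2 and all E' in a neighborhood of E, with ρ(E) > 0. Then the conditional variance of the inverse temperature given energy E equals minus the derivative of the fundamental inverse temperature: ∫₀^∞ (β - β_F(E))² · (f(β) exp(-β E)/ρ(E)) dβ = -β_F'(E). -/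
/-!
Differentiating the Laplace moments `M k E = ∫₀^∞ β^k f(β) e^{-βE} dβ` under the integral sign
gives `M k' = -M (k+1)`; for `β ≥ 0` the integrand of `M (k+1)` is monotone in `E`, so its value
at a slightly smaller energy dominates it uniformly. Since `ρ = M 0`, near `E` we get
`β_F = M 1 / M 0`, hence `-β_F' = M 2 / M 0 - (M 1 / M 0)²`, which is the second moment of
`β` under `P(β|E)` minus the square of its mean `β_F(E)`.
-/

open MeasureTheory Real

open Filter Set Topology

noncomputable def laplaceMoment (f : ℝ → ℝ) (k : ℕ) (E : ℝ) : ℝ :=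
  ∫ β in Ici (0 : ℝ), β ^ k * f β * exp (-β * E)

theorem laplaceMoment_zero (f : ℝ → ℝ) : laplaceMoment f 0 = rho f := by
  funext E; simp [laplaceMoment, rho]

theorem hasDerivAt_laplaceMoment {f : ℝ → ℝ} {k : ℕ} {E : ℝ}
    (h : ∀ᶠ E' in 𝓝 E,
      IntegrableOn (fun β => β ^ k * f β * exp (-β * E')) (Ici 0) ∧
      IntegrableOn (fun β => β ^ (k + 1) * f β * exp (-β * E')) (Ici 0)) :
    HasDerivAt (laplaceMoment f k) (-laplaceMoment f (k + 1) E) E := by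
  obtain ⟨ε, hε, hint⟩ := Metric.eventually_nhds_iff.1 h
  set a := E - ε / 2
  have ha : dist a E < ε := by
    rw [Real.dist_eq, show a - E = -(ε / 2) by ring, abs_neg, abs_of_pos (half_pos hε)]
    linarith
  have hE := hint (show dist E E < ε by simpa using hε)
  have hdom := hasDerivAt_integral_of_dominated_loc_of_deriv_le (μ := volume.restrict (Ici 0))
    (F' := fun x β => -(β ^ (k + 1) * f β * exp (-β * x)))
    (bound := fun β => ‖β ^ (k + 1) * f β * exp (-β * a)‖)
    (Ioi_mem_nhds (show a < E by simp [a]; positivity))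
    ((Metric.eventually_nhds_iff.2 ⟨ε, hε, hint⟩).mono fun _ hx => hx.1.aestronglyMeasurable)
    hE.1 hE.2.aestronglyMeasurable.neg ?_
    (hint ha).2.norm ?_
  · rw [integral_neg] at hdom
    exact hdom.2
  · filter_upwards [ae_restrict_mem measurableSet_Ici] with β (hβ : 0 ≤ β) x (hx : a < x)
    rw [norm_neg, norm_mul, norm_mul (_ * _)]
    gcongr
    simp only [Real.norm_eq_abs, abs_exp, exp_le_exp]
    nlinarith
  · refine ae_of_all _ fun β x _ => ?_
    have := (((hasDerivAt_id x).const_mul (-β)).exp).const_mul (β ^ k * f β)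
    exact this.congr_deriv (by simp only [id]; ring)

theorem betaF_eventuallyEq {f : ℝ → ℝ} {E : ℝ}
    (hρ : ∀ᶠ E' in 𝓝 E, HasDerivAt (rho f) (-laplaceMoment f 1 E') E') (hE : rho f E ≠ 0) :
    betaF f =ᶠ[𝓝 E] laplaceMoment f 1 / rho f := by
  filter_upwards [hρ, hρ.self_of_nhds.continuousAt.eventually_ne hE] with E' hd hne
  rw [betaF, (hd.log hne).deriv, neg_div, neg_neg, Pi.div_apply]

theorem integral_sub_sq_mul {μ : Measure ℝ} {g : ℝ → ℝ} (b : ℝ) (h0 : Integrable g μ)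
    (h1 : Integrable (fun x => x * g x) μ) (h2 : Integrable (fun x => x ^ 2 * g x) μ) :
    ∫ x, (x - b) ^ 2 * g x ∂μ
      = ∫ x, x ^ 2 * g x ∂μ - 2 * b * ∫ x, x * g x ∂μ + b ^ 2 * ∫ x, g x ∂μ := by
  have hexpand : (fun x => (x - b) ^ 2 * g x)
      = fun x => x ^ 2 * g x - 2 * b * (x * g x) + b ^ 2 * g x := by
    funext x; ring
  have h1' : Integrable (fun x => 2 * b * (x * g x)) μ := h1.const_mul _
  rw [hexpand, integral_add (f := fun x => x ^ 2 * g x - 2 * b * (x * g x)) (h2.sub h1')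
    (h0.const_mul _), integral_sub h2 h1', integral_const_mul, integral_const_mul]

theorem integral_sub_sq_mul_eq_laplaceMoment {f : ℝ → ℝ} {E : ℝ} {b : ℝ}
    (h : ∀ k ≤ 2, IntegrableOn (fun β => β ^ k * f β * exp (-β * E)) (Ici 0)) :
    ∫ β in Ici 0, (β - b) ^ 2 * (f β * exp (-β * E))
      = laplaceMoment f 2 E - 2 * b * laplaceMoment f 1 E + b ^ 2 * rho f E := by
  have hM : ∀ k, ∫ β in Ici 0, β ^ k * (f β * exp (-β * E)) = laplaceMoment f k E := fun k => by
    simp only [laplaceMoment, mul_assoc]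
  have hE : ∀ k ≤ 2, IntegrableOn (fun β => β ^ k * (f β * exp (-β * E))) (Ici 0) :=
    fun k hk => by simpa only [mul_assoc] using h k hk
  have h0 := hE 0 (by norm_num)
  have h1 := hE 1 (by norm_num)
  simp only [pow_zero, one_mul, pow_one] at h0 h1
  rw [integral_sub_sq_mul _ h0 h1 (hE 2 le_rfl), hM 2, ← hM 1]
  simp_rw [pow_one]
  rfl

theorem conditional_variance_beta_eq_neg_deriv_betaF_general
    (f : ℝ → ℝ) (E : ℝ)
    (hint : ∃ U ∈ nhds E, ∀ E' ∈ U, ∀ k ≤ 2,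
      IntegrableOn (fun β => β ^ k * f β * Real.exp (-β * E')) (Set.Ici (0 : ℝ)))
    (hpos : 0 < rho f E) :
    ∫ β in Set.Ici (0 : ℝ), (β - betaF f E) ^ 2 * (f β * Real.exp (-β * E) / rho f E)
      = -deriv (betaF f) E := by
  obtain ⟨U, hU, hUint⟩ := hint
  have hmom : ∀ k ≤ 2, ∀ᶠ E' in 𝓝 E,
      IntegrableOn (fun β => β ^ k * f β * exp (-β * E')) (Ici 0) :=
    fun k hk => eventually_of_mem hU fun E' hE' => hUint E' hE' k hk
  have hderiv : ∀ k ≤ 1, ∀ᶠ E' in 𝓝 E,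
      HasDerivAt (laplaceMoment f k) (-laplaceMoment f (k + 1) E') E' := fun k hk =>
    ((hmom k (by omega)).and (hmom (k + 1) (by omega))).eventually_nhds.mono
      fun _ h => hasDerivAt_laplaceMoment h
  have hρ := laplaceMoment_zero f ▸ hderiv 0 zero_le_one
  have hβF := betaF_eventuallyEq hρ hpos.ne'
  have hβF' : deriv (betaF f) E = (laplaceMoment f 1 E ^ 2 - laplaceMoment f 2 E * rho f E)
      / rho f E ^ 2 := by
    rw [hβF.deriv_eq, ((hderiv 1 le_rfl).self_of_nhds.div hρ.self_of_nhds hpos.ne').deriv]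
    ring
  have hβFE : betaF f E = laplaceMoment f 1 E / rho f E := hβF.eq_of_nhds
  simp_rw [hβFE, hβF', mul_div_assoc']
  rw [integral_div, integral_sub_sq_mul_eq_laplaceMoment (hUint E (mem_of_mem_nhds hU))]
  field_simp
  ring

/-- The conditional variance of the inverse temperature given the energy `E`
equals minus the derivative of the fundamental inverse temperature: `-β_F'(E)`. -/
theorem conditional_variance_beta_eq_neg_deriv_betaF
    (f : ℝ → ℝ) (hf_meas : Measurable f) (hf_nonneg : ∀ β, 0 ≤ f β) (E : ℝ)
    (hint : ∃ U ∈ nhds E, ∀ E' ∈ U, ∀ k ≤ 2,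
      IntegrableOn (fun β => β ^ k * f β * Real.exp (-β * E')) (Set.Ici (0 : ℝ)))
    (hpos : 0 < rho f E) :
    ∫ β in Set.Ici (0 : ℝ), (β - betaF f E) ^ 2 * (f β * Real.exp (-β * E) / rho f E)
      = -deriv (betaF f) E :=
  conditional_variance_beta_eq_neg_deriv_betaF_general f E hint hpos
end

section
/- Let f : ℝ → ℝ be nonnegative and measurable, and suppose β ↦ β^k f(β) exp(-β E') is integrable on [0,∞) for k = 0, 1, 2 and all E' in a neighborhood of E, with ρ(E) > 0. Then β_F'(E) ≤ 0; equivalently, log ρ has nonnegative second derivative at E, so the superstatistical ensemble function ρ is log-convex and its fundamental inverse temperature β_F is a decreasing function of the energy. -/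
open MeasureTheory Real

/-!
Differentiating under the integral sign gives `ρ' = -M₁` and `M₁' = -M₂`, where
`Mₖ(E) = ∫ βᵏ f(β) e^{-βE} dβ` is `moment f k E`, so `β_F = M₁ / ρ` and
`β_F' = (M₁² - ρ M₂) / ρ²`. The numerator is nonpositive by the Cauchy–Schwarz
inequality for the nonnegative measure `f(β) e^{-βE} dβ`.
-/

open Filter Topology Set

theorem sq_integral_mul_le {α : Type*} [MeasurableSpace α] {μ : Measure α} {g w : α → ℝ}
    (hw : 0 ≤ᵐ[μ] w) (h0 : Integrable w μ) (h1 : Integrable (fun a => g a * w a) μ)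
    (h2 : Integrable (fun a => g a ^ 2 * w a) μ) :
    (∫ a, g a * w a ∂μ) ^ 2 ≤ (∫ a, w a ∂μ) * ∫ a, g a ^ 2 * w a ∂μ := by
  have hquad : ∀ t : ℝ, 0 ≤ (∫ a, g a ^ 2 * w a ∂μ) * (t * t)
      + 2 * (∫ a, g a * w a ∂μ) * t + ∫ a, w a ∂μ := by
    intro t
    calc 0 ≤ ∫ a, (t * g a + 1) ^ 2 * w a ∂μ :=
          integral_nonneg_of_ae (hw.mono fun a ha => mul_nonneg (sq_nonneg _) ha)
      _ = ∫ a, t * t * (g a ^ 2 * w a) + 2 * t * (g a * w a) + w a ∂μ := by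
          congr 1; ext a; ring
      _ = _ := by
          rw [integral_add ((h2.const_mul _).fun_add (h1.const_mul _)) h0,
            integral_add (h2.const_mul _) (h1.const_mul _), integral_const_mul,
            integral_const_mul]
          ring
  have := discrim_le_zero hquad
  rw [discrim] at this
  nlinarith

noncomputable def moment (f : ℝ → ℝ) (k : ℕ) (E : ℝ) : ℝ :=
  ∫ β in Ici 0, β ^ k * f β * exp (-β * E)

theorem moment_zero (f : ℝ → ℝ) : moment f 0 = rho f := by
  funext E
  simp only [moment, rho, pow_zero, one_mul]

theorem sq_moment_one_le {f : ℝ → ℝ} (hf : ∀ β, 0 ≤ f β) {E : ℝ}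
    (hint : ∀ k ≤ 2, IntegrableOn (fun β => β ^ k * f β * exp (-β * E)) (Ici 0)) :
    moment f 1 E ^ 2 ≤ rho f E * moment f 2 E := by
  have h := sq_integral_mul_le (μ := volume.restrict (Ici 0)) (g := id)
    (w := fun β => f β * exp (-β * E))
    (ae_of_all _ fun β => mul_nonneg (hf β) (exp_pos _).le)
    (by simpa using (hint 0 (by norm_num)).integrable)
    (by simpa [mul_assoc] using (hint 1 (by norm_num)).integrable)
    (by simpa [mul_assoc] using (hint 2 (by norm_num)).integrable)
  simpa [moment, rho, mul_assoc] using h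

theorem hasDerivAt_moment {f : ℝ → ℝ} {k : ℕ} {x : ℝ}
    (hk : IntegrableOn (fun β => β ^ k * f β * exp (-β * x)) (Ici 0))
    (hk1 : ∀ᶠ y in 𝓝 x, IntegrableOn (fun β => β ^ (k + 1) * f β * exp (-β * y)) (Ici 0)) :
    HasDerivAt (moment f k) (-moment f (k + 1) x) x := by
  obtain ⟨a, ha, hax⟩ : ∃ a,
      IntegrableOn (fun β => β ^ (k + 1) * f β * exp (-β * a)) (Ici 0) ∧ a < x :=
    ((hk1.filter_mono nhdsWithin_le_nhds).and (self_mem_nhdsWithin : Iio x ∈ 𝓝[<] x)).exists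
  -- measurability is inherited from integrability, since `e^{-βy} = e^{-βx} e^{-β(y-x)}`
  have hmeas : ∀ y, AEStronglyMeasurable (fun β => β ^ k * f β * exp (-β * y))
      (volume.restrict (Ici 0)) := fun y =>
    (hk.aestronglyMeasurable.mul (by fun_prop : Continuous fun β => exp (-β * (y - x))
      ).aestronglyMeasurable).congr (ae_of_all _ fun β => by
        rw [Pi.mul_apply, mul_assoc, ← exp_add]; ring_nf)
  have hmeas' : AEStronglyMeasurable (fun β => -(β ^ (k + 1) * f β * exp (-β * x)))
      (volume.restrict (Ici 0)) :=
    ((ha.aestronglyMeasurable.mul (by fun_prop : Continuous fun β => exp (-β * (x - a))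
      ).aestronglyMeasurable).congr (ae_of_all _ fun β => by
        rw [Pi.mul_apply, mul_assoc, ← exp_add]; ring_nf)).neg
  -- for `y > a` and `β ≥ 0`, `e^{-βy} ≤ e^{-βa}`: the `(k+1)`-st integrand at `a` dominates
  have key := hasDerivAt_integral_of_dominated_loc_of_deriv_le
    (F := fun y β => β ^ k * f β * exp (-β * y))
    (F' := fun y β => -(β ^ (k + 1) * f β * exp (-β * y)))
    (Ioi_mem_nhds hax) (Eventually.of_forall hmeas) hk hmeas' ?_ ha.norm ?_
  · unfold moment
    simpa only [integral_neg] using key.2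
  · filter_upwards [ae_restrict_mem measurableSet_Ici] with β (hβ : 0 ≤ β) y (hy : a < y)
    rw [norm_neg, norm_mul, norm_mul _ (exp _), norm_of_nonneg (exp_pos _).le,
      norm_of_nonneg (exp_pos _).le]
    exact mul_le_mul_of_nonneg_left (exp_le_exp.2 (by nlinarith)) (by positivity)
  · filter_upwards with β y _
    exact (((hasDerivAt_id' y).const_mul (-β)).exp.const_mul (β ^ k * f β)).congr_deriv
      (by ring)

theorem hasDerivAt_betaF {f : ℝ → ℝ} {E : ℝ}
    (hint : ∀ᶠ x in 𝓝 E, ∀ k ≤ 2, IntegrableOn (fun β => β ^ k * f β * exp (-β * x)) (Ici 0))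
    (hpos : 0 < rho f E) :
    HasDerivAt (betaF f) ((moment f 1 E ^ 2 - rho f E * moment f 2 E) / rho f E ^ 2) E := by
  have hderiv : ∀ k ≤ 1, ∀ᶠ x in 𝓝 E, HasDerivAt (moment f k) (-moment f (k + 1) x) x := by
    intro k hk
    filter_upwards [hint, eventually_eventually_nhds.2 hint] with x hx hx'
    exact hasDerivAt_moment (hx k (by omega)) (hx'.mono fun y hy => hy (k + 1) (by omega))
  have hρ : ∀ᶠ x in 𝓝 E, HasDerivAt (rho f) (-moment f 1 x) x := by
    simpa only [moment_zero] using hderiv 0 (by norm_num)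
  have hne : ∀ᶠ x in 𝓝 E, rho f x ≠ 0 :=
    hρ.self_of_nhds.continuousAt.eventually_ne hpos.ne'
  have heq : betaF f =ᶠ[𝓝 E] fun x => moment f 1 x / rho f x := by
    filter_upwards [hρ, hne] with x hx hx0
    simp only [betaF, (hx.log hx0).deriv, neg_div, neg_neg]
  exact (((hderiv 1 le_rfl).self_of_nhds.div hρ.self_of_nhds hpos.ne').congr_of_eventuallyEq
    heq).congr_deriv (by ring)

theorem iteratedDeriv_two_log_rho (f : ℝ → ℝ) (E : ℝ) :
    iteratedDeriv 2 (fun E' => log (rho f E')) E = -deriv (betaF f) E := by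
  have h : deriv (fun E' => log (rho f E')) = -betaF f := by
    funext x
    simp [betaF]
  rw [iteratedDeriv_succ, iteratedDeriv_one, h, deriv.neg]

theorem deriv_betaF_nonpos_general
    (f : ℝ → ℝ) (hf_nonneg : ∀ β, 0 ≤ f β) (E : ℝ)
    (hint : ∃ U ∈ nhds E, ∀ E' ∈ U, ∀ k ≤ 2,
      IntegrableOn (fun β => β ^ k * f β * Real.exp (-β * E')) (Set.Ici (0 : ℝ)))
    (hpos : 0 < rho f E) :
    deriv (betaF f) E ≤ 0 ∧
    0 ≤ iteratedDeriv 2 (fun E' => Real.log (rho f E')) E := by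
  obtain ⟨U, hU, hUint⟩ := hint
  have hint' : ∀ᶠ x in 𝓝 E, ∀ k ≤ 2,
      IntegrableOn (fun β => β ^ k * f β * exp (-β * x)) (Ici 0) := mem_of_superset hU hUint
  have hβF : deriv (betaF f) E ≤ 0 := by
    rw [(hasDerivAt_betaF hint' hpos).deriv]
    exact div_nonpos_of_nonpos_of_nonneg
      (sub_nonpos.2 (sq_moment_one_le hf_nonneg hint'.self_of_nhds)) (sq_nonneg _)
  exact ⟨hβF, by rw [iteratedDeriv_two_log_rho]; linarith⟩

/-- The fundamental inverse temperature of a superstatistical ensemble is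
decreasing: `β_F'(E) ≤ 0`; equivalently, `log ρ` has a nonnegative second derivative
at `E` (log-convexity of the ensemble function). -/
theorem deriv_betaF_nonpos
    (f : ℝ → ℝ) (hf_meas : Measurable f) (hf_nonneg : ∀ β, 0 ≤ f β) (E : ℝ)
    (hint : ∃ U ∈ nhds E, ∀ E' ∈ U, ∀ k ≤ 2,
      IntegrableOn (fun β => β ^ k * f β * Real.exp (-β * E')) (Set.Ici (0 : ℝ)))
    (hpos : 0 < rho f E) :
    deriv (betaF f) E ≤ 0 ∧
    0 ≤ iteratedDeriv 2 (fun E' => Real.log (rho f E')) E :=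
  deriv_betaF_nonpos_general f hf_nonneg E hint hpos
end

section
/- Let ρ : ℝ → ℝ be positive and continuously differentiable, set β_F(E) = -(d/dE) log ρ(E), and suppose β_F is differentiable and satisfies β_F'(E) = A(β_F(E)) for all E, where A : ℝ → ℝ is a Lipschitz continuous function. If E₁, E₂ ∈ ℝ satisfy β_F(E₁) = β_F(E₂), then for every t ∈ ℝ one has β_F(E₁ + t) = β_F(E₂ + t) and ρ(E₁ + t)/ρ(E₁) = ρ(E₂ + t)/ρ(E₂); that is, the ratio function R(t; E) = ρ(E+t)/ρ(E) depends on E only through the value β_F(E). -/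
/-!
`β_F` solves the autonomous equation `β' = A(β)` on all of `ℝ`, so every translate
`s ↦ β_F(E + s)` solves it too. Since `A` is Lipschitz, solutions are determined by their
value at one time, hence `β_F(E₁ + ·) = β_F(E₂ + ·)`. Thus `log ρ(E₁ + ·)` and `log ρ(E₂ + ·)`
have the same derivative and differ by a constant, which is the statement about the ratios.
-/

open Real

theorem autonomous_ODE_solution_comp_const_add_eq {E : Type*} [NormedAddCommGroup E]
    [NormedSpace ℝ E] {v : E → E} {K : NNReal} (hv : LipschitzWith K v) {f g : ℝ → E}
    (hf : ∀ s, HasDerivAt f (v (f s)) s) (hg : ∀ s, HasDerivAt g (v (g s)) s)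
    {a b : ℝ} (hab : f a = g b) : (fun s => f (a + s)) = fun s => g (b + s) :=
  ODE_solution_unique_univ (v := fun _ => v) (s := fun _ => Set.univ) (t₀ := 0)
    (fun _ => hv.lipschitzOnWith) (fun s => ⟨(hf (a + s)).comp_const_add a s, trivial⟩)
    (fun s => ⟨(hg (b + s)).comp_const_add b s, trivial⟩) (by simpa using hab)

theorem sub_eq_sub_of_deriv_comp_const_add_eq {F : Type*} [NormedAddCommGroup F]
    [NormedSpace ℝ F] {f : ℝ → F} (hf : Differentiable ℝ f) {a b : ℝ}
    (h : ∀ s, deriv f (a + s) = deriv f (b + s)) (t : ℝ) :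
    f (a + t) - f a = f (b + t) - f b := by
  have hderiv : ∀ s, HasDerivAt (fun s => f (a + s) - f (b + s)) 0 s := fun s =>
    (((hf (a + s)).hasDerivAt.comp_const_add a s).sub
      ((hf (b + s)).hasDerivAt.comp_const_add b s)).congr_deriv (by rw [h s, sub_self])
  have hconst := is_const_of_deriv_eq_zero (fun s => (hderiv s).differentiableAt)
    (fun s => (hderiv s).deriv) t 0
  simp only [add_zero] at hconst
  rw [sub_eq_sub_iff_sub_eq_sub, hconst]

theorem div_eq_div_of_deriv_log_comp_const_add_eq {ρ : ℝ → ℝ} (hpos : ∀ x, 0 < ρ x)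
    (hρ : Differentiable ℝ ρ) {a b : ℝ}
    (h : ∀ s, deriv (fun x => log (ρ x)) (a + s) = deriv (fun x => log (ρ x)) (b + s))
    (t : ℝ) : ρ (a + t) / ρ a = ρ (b + t) / ρ b := by
  have hlog := sub_eq_sub_of_deriv_comp_const_add_eq
    (fun x => (hρ x).log (hpos x).ne') h t
  rw [← log_div (hpos _).ne' (hpos _).ne', ← log_div (hpos _).ne' (hpos _).ne'] at hlog
  exact log_injOn_pos (div_pos (hpos _) (hpos _)) (div_pos (hpos _) (hpos _)) hlog

/-- Let `ρ` be positive and continuously differentiable, let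
`β_F(E) = -(d/dE) log ρ(E)`, and suppose `β_F` is differentiable and satisfies the
autonomous ODE `β_F' = A(β_F)` with `A` Lipschitz. If `β_F(E₁) = β_F(E₂)`, then for
every `t` one has `β_F(E₁+t) = β_F(E₂+t)` and `ρ(E₁+t)/ρ(E₁) = ρ(E₂+t)/ρ(E₂)`; i.e.
the ratio function `R(t; E) = ρ(E+t)/ρ(E)` depends on `E` only through `β_F(E)`. -/
theorem ratio_function_depends_only_on_betaF
    (ρ : ℝ → ℝ) (hpos : ∀ E, 0 < ρ E) (hC1 : ContDiff ℝ 1 ρ)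
    (A : ℝ → ℝ) (K : NNReal) (hA : LipschitzWith K A)
    (hdiff : Differentiable ℝ (fun E => -deriv (fun x => Real.log (ρ x)) E))
    (hode : ∀ E : ℝ, deriv (fun E' => -deriv (fun x => Real.log (ρ x)) E') E
      = A (-deriv (fun x => Real.log (ρ x)) E))
    (E₁ E₂ : ℝ)
    (heq : -deriv (fun x => Real.log (ρ x)) E₁ = -deriv (fun x => Real.log (ρ x)) E₂) :
    ∀ t : ℝ,
      -deriv (fun x => Real.log (ρ x)) (E₁ + t)
        = -deriv (fun x => Real.log (ρ x)) (E₂ + t) ∧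
      ρ (E₁ + t) / ρ E₁ = ρ (E₂ + t) / ρ E₂ := by
  set β : ℝ → ℝ := fun E => -deriv (fun x => Real.log (ρ x)) E
  have hβ : ∀ E, HasDerivAt β (A (β E)) E := fun E => hode E ▸ (hdiff E).hasDerivAt
  have hβ_translate : ∀ s, β (E₁ + s) = β (E₂ + s) :=
    congrFun (autonomous_ODE_solution_comp_const_add_eq hA hβ hβ heq)
  exact fun t => ⟨hβ_translate t, div_eq_div_of_deriv_log_comp_const_add_eq hpos
    (hC1.differentiable one_ne_zero) (fun s => neg_inj.mp (hβ_translate s)) t⟩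
end

section
/- Let q > 1, β₀ > 0, set c = 1/(q-1), let E > -1/((q-1) β₀), and let β' = β₀/(1 + (q-1) β₀ E). Then for every β > 0, the conditional density of inverse temperature given energy in the q-canonical ensemble, namely f(β) exp(-β E)/ρ(E) with f(β) = (1/(β₀ (q-1) Γ(c))) exp(-β/(β₀ (q-1))) (β/(β₀ (q-1)))^{c-1} and ρ(E) = (1 + (q-1) β₀ E)^{1/(1-q)}, equals the gamma density (1/(β' (q-1) Γ(c))) exp(-β/(β' (q-1))) (β/(β' (q-1)))^{c-1}; in particular it depends on E only through β' = β_F(E). -/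
/-!
The weight `f` is the gamma density of shape `c` and rate `1/(β₀(q-1))`. Multiplying a gamma
density of rate `r` by the Boltzmann factor `exp(-βE)` gives, up to the constant factor
`(r/(r+E))^c`, the gamma density of the same shape and rate `r + E`. For the q-canonical
ensemble `r + E = (1 + (q-1)β₀E)/(β₀(q-1)) = 1/(β'(q-1))`, and the constant `(r/(r+E))^c` is
exactly `ρ(E) = (1 + (q-1)β₀E)^(-c)`.
-/

open Real ProbabilityTheory

lemma gammaPDFReal_inv_eq {θ x : ℝ} (hθ : 0 < θ) (hx : 0 ≤ x) (a : ℝ) :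
    gammaPDFReal a θ⁻¹ x = 1 / (θ * Gamma a) * exp (-x / θ) * (x / θ) ^ (a - 1) := by
  have hpow : θ⁻¹ ^ a = θ⁻¹ * θ⁻¹ ^ (a - 1) := by
    conv_lhs => rw [← add_sub_cancel 1 a]
    rw [rpow_add (inv_pos.mpr hθ), rpow_one]
  rw [gammaPDFReal, if_pos hx, div_eq_mul_inv x θ, mul_rpow hx (inv_nonneg.mpr hθ.le), hpow]
  ring_nf

lemma gammaPDFReal_mul_exp_neg_mul {a r t : ℝ} (hr : 0 < r) (hrt : 0 < r + t) (x : ℝ) :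
    gammaPDFReal a r x * exp (-(t * x)) = (r / (r + t)) ^ a * gammaPDFReal a (r + t) x := by
  unfold gammaPDFReal
  split_ifs
  · have hexp : exp (-(r * x)) * exp (-(t * x)) = exp (-((r + t) * x)) := by
      rw [← exp_add]; ring_nf
    rw [div_rpow hr.le hrt.le, ← hexp]
    field_simp [(rpow_pos_of_pos hrt a).ne']
  · simp

/-- In the q-canonical ensemble, the conditional density of the inverse
temperature given the energy, `f(β)exp(-βE)/ρ(E)` with gamma weight `f` and
`ρ(E) = (1+(q-1)β₀E)^(1/(1-q))`, equals the gamma density with shape `c = 1/(q-1)` and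
scale `β'(q-1)`, where `β' = β₀/(1+(q-1)β₀E)`; in particular it depends on `E` only
through `β' = β_F(E)`. -/
theorem qcanonical_conditional_density
    (q β₀ : ℝ) (hq : 1 < q) (hβ₀ : 0 < β₀)
    (c : ℝ) (hc : c = 1 / (q - 1))
    (E : ℝ) (hE : -1 / ((q - 1) * β₀) < E)
    (β' : ℝ) (hβ' : β' = β₀ / (1 + (q - 1) * β₀ * E))
    (β : ℝ) (hβ : 0 < β) :
    (1 / (β₀ * (q - 1) * Real.Gamma c)) * Real.exp (-β / (β₀ * (q - 1))) *
        (β / (β₀ * (q - 1))) ^ (c - 1) * Real.exp (-β * E) /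
        ((1 + (q - 1) * β₀ * E) ^ ((1 : ℝ) / (1 - q)))
      = (1 / (β' * (q - 1) * Real.Gamma c)) * Real.exp (-β / (β' * (q - 1))) *
        (β / (β' * (q - 1))) ^ (c - 1) := by
  have hq1 : 0 < q - 1 := sub_pos.mpr hq
  have hθ : 0 < β₀ * (q - 1) := mul_pos hβ₀ hq1
  have hA : 0 < 1 + (q - 1) * β₀ * E := by
    have := (div_lt_iff₀ (mul_pos hq1 hβ₀)).mp hE
    linarith
  have hθ' : 0 < β' * (q - 1) := by rw [hβ']; positivity
  have hrate : (β' * (q - 1))⁻¹ = (β₀ * (q - 1))⁻¹ + E := by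
    rw [hβ']; field_simp
  have hρ : (1 + (q - 1) * β₀ * E) ^ ((1 : ℝ) / (1 - q))
      = ((β₀ * (q - 1))⁻¹ / ((β₀ * (q - 1))⁻¹ + E)) ^ c := by
    have hratio : (β₀ * (q - 1))⁻¹ / (β' * (q - 1))⁻¹ = (1 + (q - 1) * β₀ * E)⁻¹ := by
      rw [hβ']; field_simp
    rw [← hrate, hratio, inv_rpow hA.le, ← rpow_neg hA.le, hc, ← one_div_neg_eq_neg_one_div, neg_sub]
  have hrate_pos : 0 < (β₀ * (q - 1))⁻¹ + E := hrate ▸ inv_pos.mpr hθ'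
  rw [← gammaPDFReal_inv_eq hθ hβ.le, ← gammaPDFReal_inv_eq hθ' hβ.le, neg_mul, mul_comm β E,
    gammaPDFReal_mul_exp_neg_mul (inv_pos.mpr hθ) hrate_pos, hρ, hrate]
  exact mul_div_cancel_left₀ _ (by positivity)
end

section
/- Let q > 1, β₀ > 0, α > -1, set c = 1/(q-1), and assume c > α + 1. Then for every β > 0, ∫₀^{β₀} [(1/(β' (q-1) Γ(c))) exp(-β/(β' (q-1))) (β/(β' (q-1)))^{c-1}] · [(1/(β₀ B(α+1, c-α-1))) (β₀/β')^{2-c} (β₀/β' - 1)^α] dβ' = (1/(β₀ (q-1) Γ(c-α-1))) exp(-β/(β₀ (q-1))) (β/(β₀ (q-1)))^{c-α-2}; that is, the marginal distribution of the superstatistical inverse temperature β is a gamma distribution with shape c - α - 1 and scale β₀ (q-1). -/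
/-!
The substitution `t = β / (q - 1) · (1 / β' - 1 / β₀)` maps `(0, β₀)` onto `(0, ∞)`. Writing
`x = β / (β₀ (q - 1))` and `u = β₀ / β'`, the two densities multiply to a constant times
`u² e^{-xu} (u - 1)^α`, which is that constant times `e^{-t} t^α dt`; the integral is therefore the
constant times `Γ(α + 1)`, and the Beta normalisation turns the result into the gamma density of
shape `c - α - 1` and scale `β₀ (q - 1)`.
-/

open MeasureTheory Real

/-- The real Beta function `B(a,b) = Γ(a)Γ(b)/Γ(a+b)`. -/
noncomputable def betaFun (a b : ℝ) : ℝ :=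
  Real.Gamma a * Real.Gamma b / Real.Gamma (a + b)

open Set

theorem image_mul_inv_sub_inv_Ioo {a b : ℝ} (ha : 0 < a) (hb : 0 < b) :
    (fun s => a * (s⁻¹ - b⁻¹)) '' Ioo 0 b = Ioi 0 := by
  have : (fun s : ℝ => a * (s⁻¹ - b⁻¹)) = (a * ·) ∘ (· - b⁻¹) ∘ Inv.inv := rfl
  rw [this, image_comp, image_comp, image_inv_eq_inv, inv_Ioo_0_left hb, image_sub_const_Ioi,
    sub_self, image_const_mul_Ioi_zero ha]

theorem integral_Ioo_inv_sub_inv_smul {E : Type*} [NormedAddCommGroup E] [NormedSpace ℝ E]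
    {a b : ℝ} (ha : 0 < a) (hb : 0 < b) (f : ℝ → E) :
    ∫ s in Ioo 0 b, (a / s ^ 2) • f (a * (s⁻¹ - b⁻¹)) = ∫ t in Ioi 0, f t := by
  have hderiv : ∀ s ∈ Ioo 0 b,
      HasDerivWithinAt (fun s => a * (s⁻¹ - b⁻¹)) (-(a / s ^ 2)) (Ioo 0 b) s := by
    intro s hs
    exact (((hasDerivAt_inv hs.1.ne').sub_const b⁻¹).const_mul a).hasDerivWithinAt.congr_deriv
      (by ring)
  have hinj : InjOn (fun s => a * (s⁻¹ - b⁻¹)) (Ioo 0 b) := fun s _ s' _ h => by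
    simpa [ha.ne'] using h
  rw [← image_mul_inv_sub_inv_Ioo ha hb,
    integral_image_eq_integral_abs_deriv_smul measurableSet_Ioo hderiv hinj]
  refine setIntegral_congr_fun measurableSet_Ioo fun s hs => ?_
  rw [abs_neg, abs_of_pos (div_pos ha (pow_pos hs.1 2))]

noncomputable def gammaDensity (shape scale x : ℝ) : ℝ :=
  1 / (scale * Gamma shape) * exp (-x / scale) * (x / scale) ^ (shape - 1)

/-- `P(β' | q, β₀)`, with `1 / (1 - q) + 2` written as `2 - c`. -/
noncomputable def fundamentalDensity (α c β₀ β' : ℝ) : ℝ :=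
  1 / (β₀ * betaFun (α + 1) (c - α - 1)) * (β₀ / β') ^ (2 - c) * (β₀ / β' - 1) ^ α

theorem gammaDensity_mul_fundamentalDensity {k β₀ α c β s : ℝ} (hk : 0 < k) (hα : -1 < α)
    (hcα : α + 1 < c) (hβ : 0 < β) (hs : s ∈ Ioo 0 β₀) :
    gammaDensity c (s * k) β * fundamentalDensity α c β₀ s =
      β / k / s ^ 2 * (gammaDensity (c - α - 1) (β₀ * k) β / Gamma (α + 1) *
        (exp (-(β / k * (s⁻¹ - β₀⁻¹))) * (β / k * (s⁻¹ - β₀⁻¹)) ^ α)) := by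
  obtain ⟨hs, hsβ₀⟩ := hs
  have hβ₀ : 0 < β₀ := hs.trans hsβ₀
  set x := β / (β₀ * k) with hx_def
  set u := β₀ / s with hu_def
  have hx : 0 < x := by positivity
  have hu : 1 < u := (one_lt_div hs).mpr hsβ₀
  have hu₀ : 0 < u := one_pos.trans hu
  have hβs : β / (s * k) = x * u := by rw [hx_def, hu_def]; field_simp
  have ht : β / k * (s⁻¹ - β₀⁻¹) = x * (u - 1) := by rw [hx_def, hu_def]; field_simp
  have hΓ₁ : Gamma (α + 1) ≠ 0 := (Gamma_pos_of_pos (by linarith)).ne'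
  have hΓ₂ : Gamma (c - α - 1) ≠ 0 := (Gamma_pos_of_pos (by linarith)).ne'
  have hΓ : Gamma c ≠ 0 := (Gamma_pos_of_pos (by linarith)).ne'
  have hB : betaFun (α + 1) (c - α - 1) = Gamma (α + 1) * Gamma (c - α - 1) / Gamma c := by
    rw [betaFun, show α + 1 + (c - α - 1) = c by ring]
  have hxc : x ^ (c - 1) = x ^ (c - α - 1 - 1) * x ^ α * x := by
    rw [← rpow_add hx, ← rpow_add_one hx.ne']; ring_nf
  have huc : u ^ (2 - c) = u / u ^ (c - 1) := by
    rw [show 2 - c = 1 - (c - 1) by ring, rpow_sub hu₀, rpow_one]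
  have hexp : exp (-(x * (u - 1))) = exp (-(x * u)) / exp (-x) := by
    rw [← exp_sub]; ring_nf
  unfold gammaDensity fundamentalDensity
  rw [neg_div, neg_div, hβs, ht, ← hx_def, mul_rpow hx.le hu₀.le, mul_rpow hx.le (by linarith),
    hxc, huc, hB, hexp]
  simp only [hx_def, hu_def]
  field_simp

theorem qcanonical_marginal_beta_distribution_general
    (q β₀ α : ℝ) (hq : 1 < q) (hβ₀ : 0 < β₀) (hα : -1 < α)
    (c : ℝ) (hcα : α + 1 < c)
    (β : ℝ) (hβ : 0 < β) :
    ∫ β' in Set.Ioo (0 : ℝ) β₀,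
        ((1 / (β' * (q - 1) * Real.Gamma c)) * Real.exp (-β / (β' * (q - 1))) *
          (β / (β' * (q - 1))) ^ (c - 1)) *
        ((1 / (β₀ * betaFun (α + 1) (c - α - 1))) * (β₀ / β') ^ (2 - c) *
          (β₀ / β' - 1) ^ α)
      = (1 / (β₀ * (q - 1) * Real.Gamma (c - α - 1))) *
          Real.exp (-β / (β₀ * (q - 1))) * (β / (β₀ * (q - 1))) ^ (c - α - 2) := by
  have hk : 0 < q - 1 := sub_pos.mpr hq
  set K := gammaDensity (c - α - 1) (β₀ * (q - 1)) β / Gamma (α + 1)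
  calc ∫ β' in Ioo 0 β₀, gammaDensity c (β' * (q - 1)) β * fundamentalDensity α c β₀ β'
      _ = ∫ s in Ioo 0 β₀, (β / (q - 1) / s ^ 2) •
            (K * (exp (-(β / (q - 1) * (s⁻¹ - β₀⁻¹))) * (β / (q - 1) * (s⁻¹ - β₀⁻¹)) ^ α)) :=
        setIntegral_congr_fun measurableSet_Ioo fun s hs =>
          gammaDensity_mul_fundamentalDensity hk hα hcα hβ hs
      _ = ∫ t in Ioi 0, K * (exp (-t) * t ^ α) :=
        integral_Ioo_inv_sub_inv_smul (div_pos hβ hk) hβ₀ fun t => K * (exp (-t) * t ^ α)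
      _ = K * Gamma (α + 1) := by
        rw [integral_const_mul, Gamma_eq_integral (by linarith), add_sub_cancel_right]
      _ = gammaDensity (c - α - 1) (β₀ * (q - 1)) β :=
        div_mul_cancel₀ _ (Gamma_pos_of_pos (by linarith)).ne'
      _ = _ := by rw [gammaDensity, show c - α - 1 - 1 = c - α - 2 by ring]

/-- Marginalizing the gamma conditional density `P(β|β',q)` against the
density `P(β'|q,β₀)` of the fundamental inverse temperature over `β' ∈ (0, β₀)` yields
a gamma distribution for `β` with shape `c-α-1` and scale `β₀(q-1)`. -/
theorem qcanonical_marginal_beta_distribution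
    (q β₀ α : ℝ) (hq : 1 < q) (hβ₀ : 0 < β₀) (hα : -1 < α)
    (c : ℝ) (hc : c = 1 / (q - 1)) (hcα : α + 1 < c)
    (β : ℝ) (hβ : 0 < β) :
    ∫ β' in Set.Ioo (0 : ℝ) β₀,
        ((1 / (β' * (q - 1) * Real.Gamma c)) * Real.exp (-β / (β' * (q - 1))) *
          (β / (β' * (q - 1))) ^ (c - 1)) *
        ((1 / (β₀ * betaFun (α + 1) (c - α - 1))) * (β₀ / β') ^ (2 - c) *
          (β₀ / β' - 1) ^ α)
      = (1 / (β₀ * (q - 1) * Real.Gamma (c - α - 1))) *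
          Real.exp (-β / (β₀ * (q - 1))) * (β / (β₀ * (q - 1))) ^ (c - α - 2) :=
  qcanonical_marginal_beta_distribution_general q β₀ α hq hβ₀ hα c hcα β hβ
end

section
/- The function q ↦ (q-1) Γ(1/(q-1)) exp((1/(q-1)) (1 + (q-2) ψ(1/(q-1)))), where Γ is the Gamma function and ψ = (ln Γ)' is the digamma function, is integrable on the interval (1, ∞); that is, the entropic prior P(q|∅) ∝ exp(S_z(q)) on q ≥ 1 is normalizable. -/
/-!
In the shape parameter `t = 1/(q-1)` of the gamma distribution the integrand becomes
`t⁻¹ Γ(t) exp(t + (1-t) ψ(t))`. Convexity of `log Γ` and `log Γ(t+1) = log Γ(t) + log t` squeeze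
`ψ(t)` between `log t - 1/t` and `log (t+1) - 1/t`, and integrating `ψ ≤ log` from `1` gives the
Stirling-type bound `log Γ(t) ≤ t log t - t + 1`. For `t ≥ 1` (that is, `q ≤ 2`) these bound the
integrand by `e²`; for `t ≤ 1` they combine with `t Γ(t) = Γ(t+1) ≤ 1` into the integrable bound
`2e² (q-1)² e^{-(q-1)}`.
-/

open MeasureTheory Real

/-- The digamma function `ψ = (ln Γ)'`. -/
noncomputable def digamma (x : ℝ) : ℝ :=
  deriv (fun y => Real.log (Real.Gamma y)) x

open Set

section Digamma

variable {x : ℝ}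

lemma differentiableAt_log_Gamma (hx : 0 < x) :
    DifferentiableAt ℝ (fun y => log (Gamma y)) x :=
  (differentiableAt_Gamma fun m => ((neg_nonpos.2 m.cast_nonneg).trans_lt hx).ne').log
    (Gamma_pos_of_pos hx).ne'

lemma log_Gamma_add_one (hx : 0 < x) : log (Gamma (x + 1)) = log (Gamma x) + log x := by
  rw [Gamma_add_one hx.ne', log_mul hx.ne' (Gamma_pos_of_pos hx).ne', add_comm]

lemma digamma_add_one (hx : 0 < x) : digamma (x + 1) = digamma x + x⁻¹ := by
  have hlog : (fun y => log (Gamma (y + 1))) =ᶠ[nhds x] fun y => log (Gamma y) + log y :=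
    (lt_mem_nhds hx).mono fun y hy => log_Gamma_add_one hy
  rw [digamma, ← deriv_comp_add_const, hlog.deriv_eq,
    deriv_fun_add (differentiableAt_log_Gamma hx) (differentiableAt_log hx.ne'), deriv_log, digamma]

lemma slope_log_Gamma_add_one (hx : 0 < x) : slope (log ∘ Gamma) x (x + 1) = log x := by
  simp [slope_def_field, log_Gamma_add_one hx]

lemma digamma_le_log (hx : 0 < x) : digamma x ≤ log x :=
  slope_log_Gamma_add_one hx ▸ convexOn_log_Gamma.deriv_le_slope hx (by simp; linarith)
    (lt_add_one x) (differentiableAt_log_Gamma hx)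

lemma log_sub_inv_le_digamma (hx : 0 < x) : log x - x⁻¹ ≤ digamma x := by
  have h : log x ≤ digamma (x + 1) :=
    slope_log_Gamma_add_one hx ▸ convexOn_log_Gamma.slope_le_deriv hx (by simp; linarith)
      (lt_add_one x) (differentiableAt_log_Gamma (by linarith))
  rw [digamma_add_one hx] at h
  linarith

lemma digamma_le_log_add_one_sub_inv (hx : 0 < x) : digamma x ≤ log (x + 1) - x⁻¹ := by
  have h := digamma_le_log (show 0 < x + 1 by linarith)
  rw [digamma_add_one hx] at h
  linarith

end Digamma

section GammaBounds

variable {t : ℝ}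

lemma log_Gamma_le (ht : 1 ≤ t) : log (Gamma t) ≤ t * log t - t + 1 := by
  let g : ℝ → ℝ := fun u => u * log u - u + 1 - log (Gamma u)
  have hg : ∀ u ∈ Ici (1 : ℝ), HasDerivAt g (log u + 1 - 1 - digamma u) u := fun u hu =>
    have hu0 : 0 < u := zero_lt_one.trans_le hu
    (((hasDerivAt_mul_log hu0.ne').sub (hasDerivAt_id u)).add_const 1).sub
      (differentiableAt_log_Gamma hu0).hasDerivAt
  have hmono : MonotoneOn g (Ici 1) :=
    monotoneOn_of_hasDerivWithinAt_nonneg (convex_Ici 1)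
      (fun u hu => (hg u hu).continuousAt.continuousWithinAt)
      (fun u hu => (hg u (interior_subset hu)).hasDerivWithinAt)
      (fun u hu => by
        have hu0 : 0 < u := zero_lt_one.trans_le (interior_subset hu : u ∈ Ici (1 : ℝ))
        linarith [digamma_le_log hu0])
  have h := hmono self_mem_Ici ht ht
  simp [g] at h
  linarith

lemma mul_Gamma_le_one (h0 : 0 < t) (h1 : t ≤ 1) : t * Gamma t ≤ 1 := by
  rw [← Gamma_add_one h0.ne']
  have h := convexOn_Gamma.le_on_segment (z := t + 1) (x := 1) (y := 2) (by simp) (by simp)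
    (by rw [segment_eq_Icc (by norm_num)]; constructor <;> linarith)
  simpa using h

end GammaBounds

noncomputable def entropicPriorOfShape (t : ℝ) : ℝ :=
  t⁻¹ * Gamma t * exp (t + (1 - t) * digamma t)

section EntropicPriorOfShape

variable {t : ℝ}

lemma entropicPriorOfShape_pos (ht : 0 < t) : 0 < entropicPriorOfShape t := by
  have := Gamma_pos_of_pos ht
  unfold entropicPriorOfShape
  positivity

lemma entropicPriorOfShape_le_exp_two (ht : 1 ≤ t) : entropicPriorOfShape t ≤ exp 2 := by
  have ht0 : 0 < t := by linarith
  have hexp : entropicPriorOfShape t = exp (log (Gamma t) - log t + (t + (1 - t) * digamma t)) := by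
    rw [exp_add, exp_sub, exp_log (Gamma_pos_of_pos ht0), exp_log ht0, entropicPriorOfShape]
    ring
  have hψ : (1 - t) * digamma t ≤ (1 - t) * (log t - t⁻¹) :=
    mul_le_mul_of_nonpos_left (log_sub_inv_le_digamma ht0) (by linarith)
  have hinv : (1 - t) * (log t - t⁻¹) = log t - t * log t + 1 - t⁻¹ := by
    field_simp
    ring
  rw [hexp, exp_le_exp]
  linarith [log_Gamma_le ht, inv_pos.2 ht0]

lemma entropicPriorOfShape_le (h0 : 0 < t) (h1 : t ≤ 1) :
    entropicPriorOfShape t ≤ t⁻¹ ^ 2 * exp (2 + log 2 - t⁻¹) := by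
  have hΓ : Gamma t ≤ t⁻¹ := by
    rw [← one_div, le_div_iff₀ h0, mul_comm]
    exact mul_Gamma_le_one h0 h1
  have hψ : (1 - t) * digamma t ≤ (1 - t) * (log 2 - t⁻¹) := by
    refine mul_le_mul_of_nonneg_left ((digamma_le_log_add_one_sub_inv h0).trans ?_) (by linarith)
    gcongr
    linarith
  have hinv : (1 - t) * (log 2 - t⁻¹) = log 2 - t * log 2 + 1 - t⁻¹ := by
    field_simp
    ring
  rw [entropicPriorOfShape, sq]
  gcongr
  linarith [mul_nonneg h0.le (log_nonneg one_le_two)]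

end EntropicPriorOfShape

lemma integrand_eq_entropicPriorOfShape {q : ℝ} (hq : q ≠ 1) :
    (q - 1) * Gamma (1 / (q - 1)) * exp ((1 / (q - 1)) * (1 + (q - 2) * digamma (1 / (q - 1))))
      = entropicPriorOfShape (q - 1)⁻¹ := by
  have hq1 : q - 1 ≠ 0 := sub_ne_zero.2 hq
  have hexp : (q - 1)⁻¹ * (1 + (q - 2) * digamma (q - 1)⁻¹)
      = (q - 1)⁻¹ + (1 - (q - 1)⁻¹) * digamma (q - 1)⁻¹ := by
    field_simp
    ring
  rw [entropicPriorOfShape, inv_inv, one_div, hexp]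

lemma aestronglyMeasurable_entropicPriorOfShape_comp :
    AEStronglyMeasurable (fun q : ℝ => entropicPriorOfShape (q - 1)⁻¹)
      (volume.restrict (Ioi 1)) := by
  have hshape : MapsTo (fun q : ℝ => (q - 1)⁻¹) (Ioi 1) (Ioi 0) := fun q hq =>
    mem_Ioi.2 (inv_pos.2 (sub_pos.2 hq))
  have hGamma : ContinuousOn (fun q : ℝ => Gamma (q - 1)⁻¹) (Ioi 1) :=
    differentiableOn_Gamma_Ioi.continuousOn.comp
      (continuousOn_id.sub continuousOn_const |>.inv₀ fun q hq => (sub_pos.2 hq).ne') hshape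
  have hdigamma : Measurable digamma := measurable_deriv _
  unfold entropicPriorOfShape
  refine AEStronglyMeasurable.mul (AEStronglyMeasurable.mul ?_
    (hGamma.aestronglyMeasurable measurableSet_Ioi)) ?_ <;>
    exact Measurable.aestronglyMeasurable (by fun_prop)

lemma norm_entropicPriorOfShape_inv_sub_one_le_exp_two {q : ℝ} (hq : q ∈ Ioc 1 2) :
    ‖entropicPriorOfShape (q - 1)⁻¹‖ ≤ exp 2 := by
  have hq1 : 0 < q - 1 := sub_pos.2 hq.1
  rw [norm_of_nonneg (entropicPriorOfShape_pos (inv_pos.2 hq1)).le]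
  exact entropicPriorOfShape_le_exp_two (one_le_inv₀ hq1 |>.2 (by linarith [hq.2]))

lemma norm_entropicPriorOfShape_inv_sub_one_le {q : ℝ} (hq : 2 < q) :
    ‖entropicPriorOfShape (q - 1)⁻¹‖ ≤ exp (3 + log 2) * (exp (-q) * q ^ 2) := by
  have hq1 : 0 < q - 1 := by linarith
  rw [norm_of_nonneg (entropicPriorOfShape_pos (inv_pos.2 hq1)).le]
  calc entropicPriorOfShape (q - 1)⁻¹ ≤ (q - 1) ^ 2 * exp (2 + log 2 - (q - 1)) := by
        simpa using entropicPriorOfShape_le (inv_pos.2 hq1) (inv_le_one_of_one_le₀ (by linarith))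
    _ = exp (3 + log 2) * (exp (-q) * (q - 1) ^ 2) := by
        rw [← mul_assoc, ← exp_add, mul_comm]
        congr 2
        ring
    _ ≤ exp (3 + log 2) * (exp (-q) * q ^ 2) := by
        gcongr
        all_goals linarith

/-- The entropic prior
`q ↦ (q-1) Γ(1/(q-1)) exp((1/(q-1))(1 + (q-2) ψ(1/(q-1))))` is integrable on `(1, ∞)`;
that is, the entropic prior `P(q|∅) ∝ exp(S_z(q))` on `q ≥ 1` is normalizable. -/
theorem entropic_prior_normalizable :
    IntegrableOn
      (fun q : ℝ => (q - 1) * Real.Gamma (1 / (q - 1)) *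
        Real.exp ((1 / (q - 1)) * (1 + (q - 2) * digamma (1 / (q - 1)))))
      (Set.Ioi (1 : ℝ)) := by
  refine (integrableOn_congr_fun (s := Ioi 1)
    (fun q hq => integrand_eq_entropicPriorOfShape (ne_of_gt hq)) measurableSet_Ioi).2 ?_
  rw [← Ioc_union_Ioi_eq_Ioi one_le_two]
  have hmeas := aestronglyMeasurable_entropicPriorOfShape_comp
  have htail : IntegrableOn (fun x : ℝ => exp (-x) * x ^ 2) (Ioi 0) := by
    have h := GammaIntegral_convergent (s := 3) (by norm_num)
    norm_num [rpow_two] at h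
    exact h
  refine IntegrableOn.union ?_ ?_
  · exact Integrable.mono' (integrableOn_const measure_Ioc_lt_top.ne)
      (hmeas.mono_set Ioc_subset_Ioi_self)
      (ae_restrict_of_forall_mem measurableSet_Ioc fun q hq =>
        norm_entropicPriorOfShape_inv_sub_one_le_exp_two hq)
  · exact Integrable.mono'
      ((htail.mono_set (Ioi_subset_Ioi zero_le_two)).const_mul _)
      (hmeas.mono_set (Ioi_subset_Ioi one_le_two))
      (ae_restrict_of_forall_mem measurableSet_Ioi fun q hq =>
        norm_entropicPriorOfShape_inv_sub_one_le hq)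
end
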